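/- arXiv:1412.5237 — 3 statements merged into one kernel-verified Lean document; each statement's English description precedes it below -/
import Mathlib

section
/- Let g : [A,B] → ℂ be continuous with g(y) ≠ 0 for all y, and set f(x) = ρ(l⁻¹(x)) g(l⁻¹(x)). Define the formal powers φ_k on [a,b] by φ_k = f · X⁽ᵏ⁾ for odd k and φ_k = f · X̃⁽ᵏ⁾ for even k, and the formal powers Φ_k on [A,B] by Φ_k = g · Y⁽ᵏ⁾ for odd k and Φ_k = g · Ỹ⁽ᵏ⁾ for even k, where the systems X̃, X (with base point l(y₀)) and Ỹ, Y (with base point y₀) are defined by the recursions X̃⁽⁰⁾ = X⁽⁰⁾ = Ỹ⁽⁰⁾ = Y⁽⁰⁾ ≡ 1, X̃⁽ⁿ⁾(x) = n ∫_{l(y₀)}^{x} X̃⁽ⁿ⁻¹⁾ (f²)^{(−1)^{n−1}}, X⁽ⁿ⁾(x) = n ∫_{l(y₀)}^{x} X⁽ⁿ⁻¹⁾ (f²)^{(−1)^{n}}, Ỹ⁽ᵏ⁾(y) = k ∫_{y₀}^{y} Ỹ⁽ᵏ⁻¹⁾ g² r (k odd), Ỹ⁽ᵏ⁾(y) = k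 ∫_{y₀}^{y} Ỹ⁽ᵏ⁻¹⁾ / (g² p) (k even), Y⁽ᵏ⁾(y) = k ∫_{y₀}^{y} Y⁽ᵏ⁻¹⁾ / (g² p) (k odd), Y⁽ᵏ⁾(y) = k ∫_{y₀}^{y} Y⁽ᵏ⁻¹⁾ g² r (k even). Then ρ(y) Φ_n(y) = φ_n(l(y)) for every n ∈ ℕ ∪ {0} and every y ∈ [A,B]. -/
/-!
The substitution `x = l y`, with `dx = √(r/p) dy`, turns `∫_{l y₀}^{l y} U(x) F(x) dx` into
`∫_{y₀}^{y} U(l t) √(r/p)(t) F(l t) dt`. Since `f ∘ l = ρ g` and `ρ² = √(p r)`, the weights of the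
recursions for `X`, `X̃` transform as `√(r/p) (f ∘ l)² = g² r` and `√(r/p) (f ∘ l)⁻² = (g² p)⁻¹`,
which are exactly the weights of the recursions for `Y`, `Ỹ`. By induction on `n`,
`X⁽ⁿ⁾ ∘ l = Y⁽ⁿ⁾` and `X̃⁽ⁿ⁾ ∘ l = Ỹ⁽ⁿ⁾` on `[A, B]`; multiplying by `f ∘ l = ρ g` gives the claim.
-/

open Set

-- Because `L` is monotone, no integrability or continuity of `G` is required.
theorem integral_smul_comp_primitive_of_nonneg {E : Type*} [NormedAddCommGroup E]
    [NormedSpace ℝ E] {w L : ℝ → ℝ} {A B c y₁ y₂ : ℝ} (hw : ContinuousOn w (Icc A B))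
    (hw₀ : ∀ t ∈ Icc A B, 0 ≤ w t) (hL : ∀ y, L y = ∫ s in c..y, w s) (hc : c ∈ Icc A B)
    (hy₁ : y₁ ∈ Icc A B) (hy₂ : y₂ ∈ Icc A B) (G : ℝ → E) :
    ∫ t in y₁..y₂, w t • G (L t) = ∫ x in L y₁..L y₂, G x := by
  have hAB : A ≤ B := hc.1.trans hc.2
  have hioo : Ioo (min y₁ y₂) (max y₁ y₂) ⊆ Ioo A B := fun t ⟨h₁, h₂⟩ =>
    ⟨(le_min hy₁.1 hy₂.1).trans_lt h₁, h₂.trans_le (max_le hy₁.2 hy₂.2)⟩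
  obtain rfl : L = fun y => ∫ s in c..y, w s := funext hL
  refine intervalIntegral.integral_deriv_smul_comp_of_deriv_nonneg ?_ (fun t ht => ?_)
    (fun t ht => hw₀ t (Ioo_subset_Icc_self (hioo ht)))
  · rw [← uIcc_of_le hAB] at hw hc hy₁ hy₂
    exact (intervalIntegral.continuousOn_primitive_interval' hw.intervalIntegrable hc).mono
      (uIcc_subset_uIcc hy₁ hy₂)
  · have ht := hioo ht
    exact intervalIntegral.integral_hasDerivAt_right
      (hw.mono (uIcc_subset_Icc hc (Ioo_subset_Icc_self ht))).intervalIntegrable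
      ((hw.mono Ioo_subset_Icc_self).stronglyMeasurableAtFilter isOpen_Ioo t ht)
      (hw.continuousAt (Icc_mem_nhds ht.1 ht.2))

theorem integral_mul_comp_primitive_of_nonneg {R : Type*} [NormedRing R] [NormedAlgebra ℝ R]
    {w L : ℝ → ℝ} {A B c y : ℝ} {U V F W : ℝ → R} (hw : ContinuousOn w (Icc A B))
    (hw₀ : ∀ t ∈ Icc A B, 0 ≤ w t) (hL : ∀ y, L y = ∫ s in c..y, w s) (hc : c ∈ Icc A B)
    (hUV : ∀ t ∈ Icc A B, U (L t) = V t) (hFW : ∀ t ∈ Icc A B, w t • F (L t) = W t)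
    (hy : y ∈ Icc A B) :
    ∫ x in L c..L y, U x * F x = ∫ t in c..y, V t * W t := by
  rw [← integral_smul_comp_primitive_of_nonneg hw hw₀ hL hc hc hy]
  refine intervalIntegral.integral_congr fun t ht => ?_
  have ht := uIcc_subset_Icc hc hy ht
  rw [← mul_smul_comm, hFW t ht, hUV t ht]

theorem Real.sqrt_div_mul_sqrt_mul {P R : ℝ} (hP : 0 < P) (hR : 0 ≤ R) :
    √(R / P) * √(P * R) = R := by
  rw [← Real.sqrt_mul (div_nonneg hR hP.le), show R / P * (P * R) = R ^ 2 by field_simp,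
    Real.sqrt_sq hR]

theorem Real.sqrt_div_mul_inv_sqrt_mul {P R : ℝ} (hP : 0 < P) (hR : 0 < R) :
    √(R / P) * (√(P * R))⁻¹ = P⁻¹ := by
  rw [← div_eq_mul_inv, ← Real.sqrt_div' _ (by positivity),
    show R / P / (P * R) = P⁻¹ ^ 2 by field_simp, Real.sqrt_sq (by positivity)]

theorem Real.rpow_quarter_sq {x : ℝ} (hx : 0 ≤ x) : (x ^ (1 / 4 : ℝ)) ^ 2 = √x := by
  rw [← Real.rpow_natCast, ← Real.rpow_mul hx, Real.sqrt_eq_rpow]; norm_num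

theorem sqrt_div_mul_sq_rpow_quarter {P R : ℝ} (hP : 0 < P) (hR : 0 < R) (z : ℂ) :
    (√(R / P) : ℂ) * (((P * R) ^ (1 / 4 : ℝ) : ℝ) * z) ^ 2 = z ^ 2 * R := by
  rw [mul_pow, ← Complex.ofReal_pow, Real.rpow_quarter_sq (by positivity), ← mul_assoc,
    ← Complex.ofReal_mul, Real.sqrt_div_mul_sqrt_mul hP hR.le, mul_comm]

theorem sqrt_div_mul_inv_sq_rpow_quarter {P R : ℝ} (hP : 0 < P) (hR : 0 < R) (z : ℂ) :
    (√(R / P) : ℂ) * ((((P * R) ^ (1 / 4 : ℝ) : ℝ) * z) ^ 2)⁻¹ = (z ^ 2 * P)⁻¹ := by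
  rw [mul_pow, ← Complex.ofReal_pow, Real.rpow_quarter_sq (by positivity), mul_inv, ← mul_assoc,
    ← Complex.ofReal_inv, ← Complex.ofReal_mul, Real.sqrt_div_mul_inv_sqrt_mul hP hR,
    Complex.ofReal_inv, mul_inv, mul_comm]

theorem formal_powers_transform_general
    (A B : ℝ)
    (p r : ℝ → ℝ)
    (hp : ContinuousOn p (Set.Icc A B))
    (hr : ContinuousOn r (Set.Icc A B))
    (hppos : ∀ y ∈ Set.Icc A B, 0 < p y)
    (hrpos : ∀ y ∈ Set.Icc A B, 0 < r y)
    (y₀ : ℝ) (hy₀ : y₀ ∈ Set.Icc A B)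
    (l : ℝ → ℝ) (hl : ∀ y, l y = ∫ s in y₀..y, Real.sqrt (r s / p s))
    (ρ : ℝ → ℝ) (hρ : ∀ y, ρ y = (p y * r y) ^ (1 / 4 : ℝ))
    (a b : ℝ) (ha : a = l A) (hb : b = l B)
    (hmono : StrictMonoOn l (Set.Icc A B))
    (linv : ℝ → ℝ)
    (hlinv_left : ∀ y ∈ Set.Icc A B, linv (l y) = y)
    (g : ℝ → ℂ)
    (f : ℝ → ℂ) (hf : ∀ x, f x = (ρ (linv x) : ℂ) * g (linv x))
    (Xt X : ℕ → ℝ → ℂ) (Yt Y : ℕ → ℝ → ℂ)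
    (hXt0 : ∀ x, Xt 0 x = 1) (hX0 : ∀ x, X 0 x = 1)
    (hXt : ∀ n : ℕ, ∀ x ∈ Set.Icc a b,
      Xt (n + 1) x = ((n : ℂ) + 1) * ∫ s in (l y₀)..x, Xt n s * (f s ^ 2) ^ ((-1 : ℤ) ^ n))
    (hX : ∀ n : ℕ, ∀ x ∈ Set.Icc a b,
      X (n + 1) x = ((n : ℂ) + 1) * ∫ s in (l y₀)..x, X n s * (f s ^ 2) ^ ((-1 : ℤ) ^ (n + 1)))
    (hYt0 : ∀ y, Yt 0 y = 1) (hY0 : ∀ y, Y 0 y = 1)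
    (hYt_odd : ∀ k : ℕ, Odd (k + 1) → ∀ y ∈ Set.Icc A B,
      Yt (k + 1) y = ((k : ℂ) + 1) * ∫ s in y₀..y, Yt k s * (g s ^ 2 * (r s : ℂ)))
    (hYt_even : ∀ k : ℕ, Even (k + 1) → ∀ y ∈ Set.Icc A B,
      Yt (k + 1) y = ((k : ℂ) + 1) * ∫ s in y₀..y, Yt k s / (g s ^ 2 * (p s : ℂ)))
    (hY_odd : ∀ k : ℕ, Odd (k + 1) → ∀ y ∈ Set.Icc A B,
      Y (k + 1) y = ((k : ℂ) + 1) * ∫ s in y₀..y, Y k s / (g s ^ 2 * (p s : ℂ)))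
    (hY_even : ∀ k : ℕ, Even (k + 1) → ∀ y ∈ Set.Icc A B,
      Y (k + 1) y = ((k : ℂ) + 1) * ∫ s in y₀..y, Y k s * (g s ^ 2 * (r s : ℂ)))
    :
    ∀ n : ℕ, ∀ y ∈ Set.Icc A B,
      (Odd n → (ρ y : ℂ) * (g y * Y n y) = f (l y) * X n (l y)) ∧
      (Even n → (ρ y : ℂ) * (g y * Yt n y) = f (l y) * Xt n (l y)) := by
  subst ha hb
  have hfl : ∀ t ∈ Set.Icc A B, f (l t) = (ρ t : ℂ) * g t := fun t ht => by
    rw [hf, hlinv_left t ht]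
  have hmul : ∀ t ∈ Set.Icc A B, √(r t / p t) • (f (l t) ^ 2) ^ (1 : ℤ) = g t ^ 2 * r t :=
    fun t ht => by
      rw [Complex.real_smul, zpow_one, hfl t ht, hρ]
      exact sqrt_div_mul_sq_rpow_quarter (hppos t ht) (hrpos t ht) _
  have hinv : ∀ t ∈ Set.Icc A B, √(r t / p t) • (f (l t) ^ 2) ^ (-1 : ℤ) = (g t ^ 2 * p t)⁻¹ :=
    fun t ht => by
      rw [Complex.real_smul, zpow_neg_one, hfl t ht, hρ]
      exact sqrt_div_mul_inv_sq_rpow_quarter (hppos t ht) (hrpos t ht) _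
  have transport : ∀ {U V F W : ℝ → ℂ}, (∀ t ∈ Set.Icc A B, U (l t) = V t) →
      (∀ t ∈ Set.Icc A B, √(r t / p t) • F (l t) = W t) →
      ∀ y ∈ Set.Icc A B, ∫ x in l y₀..l y, U x * F x = ∫ t in y₀..y, V t * W t :=
    fun hUV hFW _ hy => integral_mul_comp_primitive_of_nonneg
      (hr.div hp fun s hs => (hppos s hs).ne').sqrt (fun _ _ => Real.sqrt_nonneg _) hl hy₀
      hUV hFW hy
  simp only [div_eq_mul_inv] at hYt_even hY_odd
  have key : ∀ n, ∀ y ∈ Set.Icc A B, X n (l y) = Y n y ∧ Xt n (l y) = Yt n y := by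
    intro n
    induction n with
    | zero => exact fun y _ => ⟨by rw [hX0, hY0], by rw [hXt0, hYt0]⟩
    | succ n ih =>
      intro y hy
      rw [hX n _ (hmono.monotoneOn.mapsTo_Icc hy), hXt n _ (hmono.monotoneOn.mapsTo_Icc hy)]
      rcases Nat.even_or_odd n with hn | hn
      · rw [hY_odd n hn.add_one y hy, hYt_odd n hn.add_one y hy, hn.neg_one_pow,
          hn.add_one.neg_one_pow]
        exact ⟨congrArg _ (transport (fun t ht => (ih t ht).1) hinv y hy),
          congrArg _ (transport (fun t ht => (ih t ht).2) hmul y hy)⟩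
      · rw [hY_even n hn.add_one y hy, hYt_even n hn.add_one y hy, hn.neg_one_pow,
          hn.add_one.neg_one_pow]
        exact ⟨congrArg _ (transport (fun t ht => (ih t ht).1) hmul y hy),
          congrArg _ (transport (fun t ht => (ih t ht).2) hinv y hy)⟩
  intro n y hy
  rw [hfl y hy, (key n y hy).1, (key n y hy).2]
  exact ⟨fun _ => (mul_assoc _ _ _).symm, fun _ => (mul_assoc _ _ _).symm⟩

theorem formal_powers_transform
    (A B : ℝ) (hAB : A < B)
    (p r : ℝ → ℝ)
    (hp : ContinuousOn p (Set.Icc A B))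
    (hr : ContinuousOn r (Set.Icc A B))
    (hppos : ∀ y ∈ Set.Icc A B, 0 < p y)
    (hrpos : ∀ y ∈ Set.Icc A B, 0 < r y)
    (y₀ : ℝ) (hy₀ : y₀ ∈ Set.Icc A B)
    (l : ℝ → ℝ) (hl : ∀ y, l y = ∫ s in y₀..y, Real.sqrt (r s / p s))
    (ρ : ℝ → ℝ) (hρ : ∀ y, ρ y = (p y * r y) ^ (1 / 4 : ℝ))
    (a b : ℝ) (ha : a = l A) (hb : b = l B)
    (hmono : StrictMonoOn l (Set.Icc A B))
    (linv : ℝ → ℝ)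
    (hlinv_maps : Set.MapsTo linv (Set.Icc a b) (Set.Icc A B))
    (hlinv_left : ∀ y ∈ Set.Icc A B, linv (l y) = y)
    (hlinv_right : ∀ x ∈ Set.Icc a b, l (linv x) = x)
    (g : ℝ → ℂ) (hg : ContinuousOn g (Set.Icc A B))
    (hgne : ∀ y ∈ Set.Icc A B, g y ≠ 0)
    (f : ℝ → ℂ) (hf : ∀ x, f x = (ρ (linv x) : ℂ) * g (linv x))
    (Xt X : ℕ → ℝ → ℂ) (Yt Y : ℕ → ℝ → ℂ)
    (hXt0 : ∀ x, Xt 0 x = 1) (hX0 : ∀ x, X 0 x = 1)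
    (hXt : ∀ n : ℕ, ∀ x ∈ Set.Icc a b,
      Xt (n + 1) x = ((n : ℂ) + 1) * ∫ s in (l y₀)..x, Xt n s * (f s ^ 2) ^ ((-1 : ℤ) ^ n))
    (hX : ∀ n : ℕ, ∀ x ∈ Set.Icc a b,
      X (n + 1) x = ((n : ℂ) + 1) * ∫ s in (l y₀)..x, X n s * (f s ^ 2) ^ ((-1 : ℤ) ^ (n + 1)))
    (hYt0 : ∀ y, Yt 0 y = 1) (hY0 : ∀ y, Y 0 y = 1)
    (hYt_odd : ∀ k : ℕ, Odd (k + 1) → ∀ y ∈ Set.Icc A B,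
      Yt (k + 1) y = ((k : ℂ) + 1) * ∫ s in y₀..y, Yt k s * (g s ^ 2 * (r s : ℂ)))
    (hYt_even : ∀ k : ℕ, Even (k + 1) → ∀ y ∈ Set.Icc A B,
      Yt (k + 1) y = ((k : ℂ) + 1) * ∫ s in y₀..y, Yt k s / (g s ^ 2 * (p s : ℂ)))
    (hY_odd : ∀ k : ℕ, Odd (k + 1) → ∀ y ∈ Set.Icc A B,
      Y (k + 1) y = ((k : ℂ) + 1) * ∫ s in y₀..y, Y k s / (g s ^ 2 * (p s : ℂ)))
    (hY_even : ∀ k : ℕ, Even (k + 1) → ∀ y ∈ Set.Icc A B,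
      Y (k + 1) y = ((k : ℂ) + 1) * ∫ s in y₀..y, Y k s * (g s ^ 2 * (r s : ℂ)))
    :
    ∀ n : ℕ, ∀ y ∈ Set.Icc A B,
      (Odd n → (ρ y : ℂ) * (g y * Y n y) = f (l y) * X n (l y)) ∧
      (Even n → (ρ y : ℂ) * (g y * Yt n y) = f (l y) * Xt n (l y)) :=
  formal_powers_transform_general A B p r hp hr hppos hrpos y₀ hy₀ l hl ρ hρ a b ha hb hmono linv
    hlinv_left g f hf Xt X Yt Y hXt0 hX0 hXt hX hYt0 hY0 hYt_odd hYt_even hY_odd hY_even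
end

section
/- Let ω ∈ ℂ and let u : [a,b] → ℂ be twice continuously differentiable, satisfy u″(x) − Q(x) u(x) = −ω² u(x) for all x ∈ (a,b), and satisfy u(0) = 0, u′(0) = 1. Then the function v₂(y) = u(l(y))/ρ(y) satisfies (p(y) v₂′(y))′ − q(y) v₂(y) = −ω² r(y) v₂(y) for all y ∈ (A,B), together with the initial conditions v₂(y₀) = 0 and v₂′(y₀) = (1/ρ(y₀)) √(r(y₀)/p(y₀)). -/
open MeasureTheory Topology Set

/-!
With `S = l' = √(r/p)` one has `p S = ρ²`, so for `v = (u ∘ l) / ρ` the flux is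
`p v' = ρ u'(l) + w u(l)` with `w = p (ρ⁻¹)'`. Differentiating once more, the two `u'(l)` terms
cancel because `w S = -ρ'`, leaving `(p v')' = ρ S u''(l) + w' u(l)`. Substituting
`u'' = (Q - ω²) u` and using `ρ² S = r` and `(p / r³)^{1/4} = ρ / r`
(so that `Q ∘ l = q / r - (ρ / r) w'`) gives `(p v')' = (q - ω² r) v`.
-/

namespace Real

theorem mul_sqrt_div_eq_sq_rpow_quarter {P R : ℝ} (hP : 0 < P) (hR : 0 ≤ R) :
    P * √(R / P) = ((P * R) ^ (1 / 4 : ℝ)) ^ 2 := by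
  rw [← rpow_natCast, ← rpow_mul (by positivity),
    show 1 / 4 * ((2 : ℕ) : ℝ) = 1 / 2 by norm_num, ← sqrt_eq_rpow, ← sqrt_sq hP.le,
    ← sqrt_mul (sq_nonneg P), sqrt_sq hP.le]
  congr 1
  field_simp

theorem sq_rpow_quarter_mul_sqrt_div {P R : ℝ} (hP : 0 < P) (hR : 0 ≤ R) :
    ((P * R) ^ (1 / 4 : ℝ)) ^ 2 * √(R / P) = R := by
  rw [← mul_sqrt_div_eq_sq_rpow_quarter hP hR, mul_assoc, mul_self_sqrt (by positivity)]
  field_simp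

theorem div_cube_rpow_quarter_mul {P R : ℝ} (hP : 0 ≤ P) (hR : 0 < R) :
    (P / R ^ 3) ^ (1 / 4 : ℝ) * R = (P * R) ^ (1 / 4 : ℝ) := by
  have hR4 : (R ^ 4) ^ (1 / 4 : ℝ) = R := by
    rw [← rpow_natCast, ← rpow_mul hR.le]; norm_num
  rw [← hR4, ← mul_rpow (by positivity) (by positivity), hR4]
  congr 1
  field_simp

end Real

theorem intervalIntegral.hasDerivAt_integral_of_continuousOn_Icc {E : Type*}
    [NormedAddCommGroup E] [NormedSpace ℝ E] [CompleteSpace E] {f : ℝ → E} {A B c y : ℝ}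
    (hf : ContinuousOn f (Icc A B)) (hc : c ∈ Icc A B) (hy : y ∈ Ioo A B) :
    HasDerivAt (fun x => ∫ s in c..x, f s) (f y) y :=
  integral_hasDerivAt_right
    (hf.mono (uIcc_subset_Icc hc (Ioo_subset_Icc_self hy))).intervalIntegrable
    ((hf.mono Ioo_subset_Icc_self).stronglyMeasurableAtFilter isOpen_Ioo y hy)
    (hf.continuousAt (Icc_mem_nhds hy.1 hy.2))

theorem ContDiffOn.hasDerivAt_deriv {E : Type*} [NormedAddCommGroup E] [NormedSpace ℝ E]
    {f : ℝ → E} {s : Set ℝ} {x : ℝ} (hf : ContDiffOn ℝ 2 f s) (hs : s ∈ 𝓝 x) :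
    HasDerivAt (deriv f) (deriv (deriv f) x) x :=
  (((hf.contDiffAt hs).derivWithin (m := 1) (by norm_num)).differentiableAt one_ne_zero).hasDerivAt

section Liouville

variable {U V : Set ℝ} {l ρ σ p S : ℝ → ℝ} {u : ℝ → ℂ} {y : ℝ}

theorem HasDerivAt.comp_div_ofReal {s ρ' : ℝ} {u' : ℂ} (hl : HasDerivAt l s y)
    (hu : HasDerivAt u u' (l y)) (hρ : HasDerivAt ρ ρ' y) (hρ0 : ρ y ≠ 0) :
    HasDerivAt (fun t => u (l t) / ρ t) (s * u' / ρ y - u (l y) * ρ' / ρ y ^ 2) y := by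
  refine ((hu.scomp y hl).div hρ.ofReal_comp (by exact_mod_cast hρ0)).congr_deriv ?_
  simp only [Complex.real_smul, Function.comp_apply]
  field_simp

theorem deriv_eq_neg_deriv_div_sq_of_eqOn_inv (hU : IsOpen U) (hy : y ∈ U)
    (hσ : EqOn σ (fun t => (ρ t)⁻¹) U) (hρ : HasDerivAt ρ (deriv ρ y) y)
    (hρ0 : ρ y ≠ 0) : deriv σ y = -deriv ρ y / ρ y ^ 2 := by
  rw [Filter.EventuallyEq.deriv_eq (Filter.eventuallyEq_of_mem (hU.mem_nhds hy) hσ)]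
  exact (hρ.inv hρ0).deriv

theorem hasDerivAt_mul_deriv_comp_div (hU : IsOpen U) (hy : y ∈ U)
    (hl : ∀ t ∈ U, HasDerivAt l (S t) t)
    (hu : ∀ t ∈ U, HasDerivAt u (deriv u (l t)) (l t))
    (hu' : HasDerivAt (deriv u) (deriv (deriv u) (l y)) (l y))
    (hρ : ∀ t ∈ U, HasDerivAt ρ (deriv ρ t) t) (hρ0 : ∀ t ∈ U, ρ t ≠ 0)
    (hpS : ∀ t ∈ U, p t * S t = ρ t ^ 2) (hσ : EqOn σ (fun t => (ρ t)⁻¹) U)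
    (hw : DifferentiableAt ℝ (fun t => p t * deriv σ t) y) :
    HasDerivAt (fun t => (p t : ℂ) * deriv (fun t => u (l t) / ρ t) t)
      (ρ y * S y * deriv (deriv u) (l y) + deriv (fun t => p t * deriv σ t) y * u (l y)) y := by
  set w := fun t => p t * deriv σ t
  have hσ' : ∀ t ∈ U, deriv σ t = -deriv ρ t / ρ t ^ 2 := fun t ht =>
    deriv_eq_neg_deriv_div_sq_of_eqOn_inv hU ht hσ (hρ t ht) (hρ0 t ht)
  have hflux : (fun t => (ρ t : ℂ) * deriv u (l t) + (w t : ℂ) * u (l t)) =ᶠ[𝓝 y]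
      fun t => (p t : ℂ) * deriv (fun t => u (l t) / ρ t) t := by
    filter_upwards [hU.mem_nhds hy] with t ht
    rw [((hl t ht).comp_div_ofReal (hu t ht) (hρ t ht) (hρ0 t ht)).deriv]
    have hpSt : (p t : ℂ) * S t = ρ t ^ 2 := by exact_mod_cast hpS t ht
    have hρt : (ρ t : ℂ) ≠ 0 := by exact_mod_cast hρ0 t ht
    simp only [w, hσ' t ht]
    push_cast
    field_simp
    linear_combination -(deriv u (l t) * ρ t) * hpSt
  have hwS : (w y : ℂ) * S y = -deriv ρ y := by
    have hρy := hρ0 y hy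
    simp only [w, hσ' y hy]
    norm_cast
    field_simp
    linear_combination -deriv ρ y * hpS y hy
  have hD := ((hρ y hy).ofReal_comp.mul (hu'.scomp y (hl y hy))).add
    ((hw.hasDerivAt.ofReal_comp).mul ((hu y hy).scomp y (hl y hy)))
  refine (hD.congr_of_eventuallyEq hflux.symm).congr_deriv ?_
  simp only [Complex.real_smul, Function.comp_apply]
  linear_combination deriv u (l y) * hwS

theorem liouville_transform_ode {r : ℝ} {q ω : ℂ} (hU : IsOpen U) (hV : IsOpen V)
    (hlUV : MapsTo l U V) (hl : ∀ t ∈ U, HasDerivAt l (S t) t) (hu : ContDiffOn ℝ 2 u V)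
    (hp : DifferentiableOn ℝ p U) (hρ : ContDiffOn ℝ 2 ρ U) (hρ0 : ∀ t ∈ U, ρ t ≠ 0)
    (hpS : ∀ t ∈ U, p t * S t = ρ t ^ 2) (hσ : EqOn σ (fun t => (ρ t)⁻¹) U)
    (hy : y ∈ U) (hr : ρ y ^ 2 * S y = r) (hr0 : r ≠ 0)
    (hueq : deriv (deriv u) (l y) -
        (q / r - ((ρ y / r) * deriv (fun t => p t * deriv σ t) y : ℝ)) * u (l y) =
      -ω ^ 2 * u (l y)) :
    deriv (fun t => (p t : ℂ) * deriv (fun t => u (l t) / ρ t) t) y - q * (u (l y) / ρ y) =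
      -ω ^ 2 * r * (u (l y) / ρ y) := by
  have hσ_smooth : ContDiffOn ℝ 2 σ U := (hρ.inv hρ0).congr hσ
  have hw : DifferentiableAt ℝ (fun t => p t * deriv σ t) y :=
    ((hp.differentiableAt (hU.mem_nhds hy)).mul
      (hσ_smooth.hasDerivAt_deriv (hU.mem_nhds hy)).differentiableAt)
  have hD := hasDerivAt_mul_deriv_comp_div hU hy hl
    (fun t ht => ((hu.contDiffAt (hV.mem_nhds (hlUV ht))).differentiableAt two_ne_zero).hasDerivAt)
    (hu.hasDerivAt_deriv (hV.mem_nhds (hlUV hy)))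
    (fun t ht => ((hρ.contDiffAt (hU.mem_nhds ht)).differentiableAt two_ne_zero).hasDerivAt)
    hρ0 hpS hσ hw
  rw [hD.deriv, show deriv (deriv u) (l y) = _ from eq_add_of_sub_eq hueq]
  have hρy : (ρ y : ℂ) ≠ 0 := by exact_mod_cast hρ0 y hy
  have hr' : (r : ℂ) ≠ 0 := by exact_mod_cast hr0
  have hS : (S y : ℂ) = r / ρ y ^ 2 := by
    rw [eq_div_iff (pow_ne_zero 2 hρy)]
    exact_mod_cast (by linear_combination hr : S y * ρ y ^ 2 = r)
  rw [hS]
  push_cast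
  field_simp
  ring

end Liouville

theorem transformed_sine_type_solution_general
    (A B : ℝ) (hAB : A < B)
    (p r : ℝ → ℝ) (q : ℝ → ℂ)
    (hp : ContDiffOn ℝ 2 p (Set.Icc A B))
    (hr : ContDiffOn ℝ 2 r (Set.Icc A B))
    (hppos : ∀ y ∈ Set.Icc A B, 0 < p y)
    (hrpos : ∀ y ∈ Set.Icc A B, 0 < r y)
    (y₀ : ℝ) (hy₀ : y₀ ∈ Set.Ioo A B)
    (l : ℝ → ℝ) (hl : ∀ y, l y = ∫ s in y₀..y, Real.sqrt (r s / p s))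
    (ρ : ℝ → ℝ) (hρ : ∀ y, ρ y = (p y * r y) ^ (1 / 4 : ℝ))
    (a b : ℝ) (ha : a = l A) (hb : b = l B)
    (hmono : StrictMonoOn l (Set.Icc A B))
    (linv : ℝ → ℝ)
    (hlinv_left : ∀ y ∈ Set.Icc A B, linv (l y) = y)
    (Q : ℝ → ℂ)
    (hQ : ∀ x, Q x = q (linv x) / (r (linv x) : ℂ) -
      (((p (linv x) / (r (linv x)) ^ 3) ^ (1 / 4 : ℝ) *
        deriv (fun t => p t * deriv (fun s => (p s * r s) ^ (-(1 / 4) : ℝ)) t) (linv x) : ℝ) : ℂ))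
    (ω : ℂ)
    (u : ℝ → ℂ) (hu : ContDiffOn ℝ 2 u (Set.Icc a b))
    (hueq : ∀ x ∈ Set.Ioo a b, deriv (deriv u) x - Q x * u x = -ω ^ 2 * u x)
    (hu0 : u 0 = 0) (hu'0 : deriv u 0 = 1)
    (v₂ : ℝ → ℂ) (hv₂ : ∀ y, v₂ y = u (l y) / (ρ y : ℂ)) :
    (∀ y ∈ Set.Ioo A B,
        deriv (fun t => (p t : ℂ) * deriv v₂ t) y - q y * v₂ y = -ω ^ 2 * (r y : ℂ) * v₂ y) ∧
      v₂ y₀ = 0 ∧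
      deriv v₂ y₀ = 1 / (ρ y₀ : ℂ) * (Real.sqrt (r y₀ / p y₀) : ℂ) := by
  obtain rfl : v₂ = fun y => u (l y) / (ρ y : ℂ) := funext hv₂
  have hIoo : Ioo A B ⊆ Icc A B := Ioo_subset_Icc_self
  have hpr : ∀ y ∈ Icc A B, 0 < p y * r y := fun y hy => mul_pos (hppos y hy) (hrpos y hy)
  have hρ_pos : ∀ y ∈ Ioo A B, 0 < ρ y := fun y hy =>
    hρ y ▸ Real.rpow_pos_of_pos (hpr y (hIoo hy)) _
  have hρ_smooth : ContDiffOn ℝ 2 ρ (Ioo A B) :=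
    (funext hρ ▸ (hp.mul hr).rpow_const_of_ne fun y hy => (hpr y hy).ne').mono hIoo
  have hl_deriv : ∀ y ∈ Ioo A B, HasDerivAt l √(r y / p y) y := by
    rw [funext hl]
    exact fun y hy => intervalIntegral.hasDerivAt_integral_of_continuousOn_Icc
      (hr.continuousOn.div hp.continuousOn fun y hy => (hppos y hy).ne').sqrt (hIoo hy₀) hy
  have hlUV : MapsTo l (Ioo A B) (Ioo a b) := fun y hy =>
    ⟨ha ▸ hmono (left_mem_Icc.2 hAB.le) (hIoo hy) hy.1,
      hb ▸ hmono (hIoo hy) (right_mem_Icc.2 hAB.le) hy.2⟩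
  have hl₀ : l y₀ = 0 := by rw [hl, intervalIntegral.integral_same]
  refine ⟨fun y hy => ?_, by simp [hl₀, hu0], ?_⟩
  · have hP := hppos y (hIoo hy)
    have hR := hrpos y (hIoo hy)
    refine liouville_transform_ode (σ := fun s => (p s * r s) ^ (-(1 / 4) : ℝ)) isOpen_Ioo
      isOpen_Ioo hlUV hl_deriv (hu.mono Ioo_subset_Icc_self)
      (hp.mono hIoo |>.differentiableOn two_ne_zero) hρ_smooth (fun t ht => (hρ_pos t ht).ne')
      (fun t ht => by
        rw [hρ, Real.mul_sqrt_div_eq_sq_rpow_quarter (hppos t (hIoo ht)) (hrpos t (hIoo ht)).le])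
      (fun t ht => by simp only [hρ, Real.rpow_neg (hpr t (hIoo ht)).le]) hy
      (by rw [hρ, Real.sq_rpow_quarter_mul_sqrt_div hP hR.le]) hR.ne' ?_
    have hc : ρ y / r y = (p y / r y ^ 3) ^ (1 / 4 : ℝ) := by
      rw [hρ, ← Real.div_cube_rpow_quarter_mul hP.le hR, mul_div_cancel_right₀ _ hR.ne']
    simpa only [hQ, hlinv_left y (hIoo hy), hc] using hueq (l y) (hlUV hy)
  · have hu_deriv := ((hu.contDiffAt (Icc_mem_nhds (hlUV hy₀).1 (hlUV hy₀).2)).differentiableAt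
      two_ne_zero).hasDerivAt
    have hρ_deriv := ((hρ_smooth.contDiffAt (isOpen_Ioo.mem_nhds hy₀)).differentiableAt
      two_ne_zero).hasDerivAt
    rw [((hl_deriv y₀ hy₀).comp_div_ofReal hu_deriv hρ_deriv (hρ_pos y₀ hy₀).ne').deriv,
      hl₀, hu0, hu'0]
    ring

theorem transformed_sine_type_solution
    (A B : ℝ) (hAB : A < B)
    (p r : ℝ → ℝ) (q : ℝ → ℂ)
    (hp : ContDiffOn ℝ 2 p (Set.Icc A B))
    (hr : ContDiffOn ℝ 2 r (Set.Icc A B))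
    (hq : ContinuousOn q (Set.Icc A B))
    (hppos : ∀ y ∈ Set.Icc A B, 0 < p y)
    (hrpos : ∀ y ∈ Set.Icc A B, 0 < r y)
    (y₀ : ℝ) (hy₀ : y₀ ∈ Set.Ioo A B)
    (l : ℝ → ℝ) (hl : ∀ y, l y = ∫ s in y₀..y, Real.sqrt (r s / p s))
    (ρ : ℝ → ℝ) (hρ : ∀ y, ρ y = (p y * r y) ^ (1 / 4 : ℝ))
    (a b : ℝ) (ha : a = l A) (hb : b = l B)
    (hmono : StrictMonoOn l (Set.Icc A B))
    (linv : ℝ → ℝ)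
    (hlinv_maps : Set.MapsTo linv (Set.Icc a b) (Set.Icc A B))
    (hlinv_left : ∀ y ∈ Set.Icc A B, linv (l y) = y)
    (hlinv_right : ∀ x ∈ Set.Icc a b, l (linv x) = x)
    (Q : ℝ → ℂ)
    (hQ : ∀ x, Q x = q (linv x) / (r (linv x) : ℂ) -
      (((p (linv x) / (r (linv x)) ^ 3) ^ (1 / 4 : ℝ) *
        deriv (fun t => p t * deriv (fun s => (p s * r s) ^ (-(1 / 4) : ℝ)) t) (linv x) : ℝ) : ℂ))
    (ω : ℂ)
    (u : ℝ → ℂ) (hu : ContDiffOn ℝ 2 u (Set.Icc a b))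
    (hueq : ∀ x ∈ Set.Ioo a b, deriv (deriv u) x - Q x * u x = -ω ^ 2 * u x)
    (hu0 : u 0 = 0) (hu'0 : deriv u 0 = 1)
    (v₂ : ℝ → ℂ) (hv₂ : ∀ y, v₂ y = u (l y) / (ρ y : ℂ)) :
    (∀ y ∈ Set.Ioo A B,
        deriv (fun t => (p t : ℂ) * deriv v₂ t) y - q y * v₂ y = -ω ^ 2 * (r y : ℂ) * v₂ y) ∧
      v₂ y₀ = 0 ∧
      deriv v₂ y₀ = 1 / (ρ y₀ : ℂ) * (Real.sqrt (r y₀ / p y₀) : ℂ) :=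
  transformed_sine_type_solution_general A B hAB p r q hp hr hppos hrpos y₀ hy₀ l hl ρ hρ a b ha hb
    hmono linv hlinv_left Q hQ ω u hu hueq hu0 hu'0 v₂ hv₂
end

section
/- Define ρ̂ : [a,b] → ℝ by ρ̂(x) = ρ(l⁻¹(x)). Then for every y in the interior of [A,B], the potential Q of the Liouville transformation admits the representation Q(l(y)) = q(y)/r(y) + ρ̂″(l(y))/ρ(y); equivalently, −(r(y)⁻³ p(y))^{1/4} · (p(y) · ((p r)^{−1/4})′(y))′ = ρ̂″(l(y))/ρ(y). -/
/-!
Put `w = √(r/p)`, so that `l' = w` on `(A, B)`. By the inverse function rule,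
`(φ ∘ l⁻¹)' = (φ'/w) ∘ l⁻¹`, and applying this twice gives `ρ̂''(l y) = (ρ'/w)'(y) / w(y)`.
On the other side `p w = ρ²`, hence `p (ρ⁻¹)' = -ρ'/w`, and `(p/r³)^{1/4} = 1/(w ρ)`;
substituting both into the potential turns it into the same expression.
-/

open MeasureTheory Set Filter Topology

theorem StrictMonoOn.strictMonoOn_of_rightInvOn {α β : Type*} [LinearOrder α] [Preorder β]
    {f : α → β} {g : β → α} {s : Set α} {t : Set β}
    (hf : StrictMonoOn f s) (hg : MapsTo g t s) (hfg : RightInvOn g f t) :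
    StrictMonoOn g t := by
  intro x hx x' hx' hxx'
  by_contra! h
  have := hf.monotoneOn (hg hx') (hg hx) h
  rw [hfg hx', hfg hx] at this
  exact this.not_gt hxx'

theorem HasDerivAt.of_strictMonoOn_invOn {f g : ℝ → ℝ} {s t : Set ℝ} {y f' : ℝ}
    (hf : HasDerivAt f f' y) (hf' : f' ≠ 0) (hg : StrictMonoOn g t) (hgf : LeftInvOn g f s)
    (hfg : RightInvOn g f t) (hs : s ∈ 𝓝 y) (ht : t ∈ 𝓝 (f y)) :
    HasDerivAt g f'⁻¹ (f y) := by
  have hgfy : g (f y) = y := hgf (mem_of_mem_nhds hs)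
  have himage : g '' t ∈ 𝓝 (g (f y)) := by
    rw [hgfy]
    refine mem_of_superset (inter_mem hs (hf.continuousAt.preimage_mem_nhds ht)) ?_
    rintro z ⟨hz, hzt⟩
    exact ⟨f z, hzt, hgf hz⟩
  exact .of_local_left_inverse (hg.continuousAt_of_image_mem_nhds ht himage) (by rwa [hgfy]) hf'
    (eventually_of_mem ht fun x hx => hfg hx)

theorem StrictMonoOn.mapsTo_Ioo_of_invOn_Icc {α β : Type*} [LinearOrder α] [Preorder β]
    {f : α → β} {g : β → α} {A B : α} (hf : StrictMonoOn f (Icc A B))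
    (hg : MapsTo g (Icc (f A) (f B)) (Icc A B)) (hgf : LeftInvOn g f (Icc A B))
    (hfg : RightInvOn g f (Icc (f A) (f B))) : MapsTo g (Ioo (f A) (f B)) (Ioo A B) := by
  intro x hx
  have hAB : A ≤ B := (hg (Ioo_subset_Icc_self hx)).1.trans (hg (Ioo_subset_Icc_self hx)).2
  have := (hf.strictMonoOn_of_rightInvOn hg hfg).mapsTo_Ioo hx
  rwa [hgf (left_mem_Icc.2 hAB), hgf (right_mem_Icc.2 hAB)] at this

theorem StrictMonoOn.hasDerivAt_of_invOn_Icc {f g f' : ℝ → ℝ} {A B : ℝ}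
    (hf : StrictMonoOn f (Icc A B))
    (hg : MapsTo g (Icc (f A) (f B)) (Icc A B)) (hgf : LeftInvOn g f (Icc A B))
    (hfg : RightInvOn g f (Icc (f A) (f B))) (hf' : ∀ y ∈ Ioo A B, HasDerivAt f (f' y) y)
    (hf'0 : ∀ y ∈ Ioo A B, f' y ≠ 0) {x : ℝ} (hx : x ∈ Ioo (f A) (f B)) :
    HasDerivAt g (f' (g x))⁻¹ x := by
  have hgx := hf.mapsTo_Ioo_of_invOn_Icc hg hgf hfg hx
  have hfgx : f (g x) = x := hfg (Ioo_subset_Icc_self hx)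
  have := (hf' _ hgx).of_strictMonoOn_invOn (hf'0 _ hgx) (hf.strictMonoOn_of_rightInvOn hg hfg)
    hgf hfg (Icc_mem_nhds hgx.1 hgx.2) (by rw [hfgx]; exact Icc_mem_nhds hx.1 hx.2)
  rwa [hfgx] at this

theorem mul_sqrt_div_eq_rpow_quarter_sq {p r : ℝ} (hp : 0 < p) (hr : 0 < r) :
    p * √(r / p) = ((p * r) ^ (1 / 4 : ℝ)) ^ 2 := by
  refine (pow_left_inj₀ (by positivity) (by positivity) two_ne_zero).1 ?_
  rw [mul_pow, Real.sq_sqrt (by positivity), ← pow_mul, ← Real.rpow_natCast (_ ^ _),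
    ← Real.rpow_mul (by positivity)]
  norm_num
  field_simp

theorem rpow_quarter_div_pow_three_eq {p r : ℝ} (hp : 0 < p) (hr : 0 < r) :
    (p / r ^ 3) ^ (1 / 4 : ℝ) = (√(r / p))⁻¹ * ((p * r) ^ (1 / 4 : ℝ))⁻¹ := by
  refine (pow_left_inj₀ (by positivity) (by positivity) four_ne_zero).1 ?_
  rw [mul_pow, inv_pow, inv_pow, ← Real.rpow_natCast, ← Real.rpow_natCast (_ ^ (1/4 : ℝ)),
    ← Real.rpow_mul (by positivity), ← Real.rpow_mul (by positivity),
    show (4 : ℕ) = 2 * 2 from rfl, pow_mul, Real.sq_sqrt (by positivity)]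
  norm_num
  field_simp

theorem mul_deriv_inv_of_mul_eq_sq {ρ : ℝ → ℝ} {t p w ρ' : ℝ} (hρ : HasDerivAt ρ ρ' t)
    (hρ0 : ρ t ≠ 0) (hw : w ≠ 0) (hpw : p * w = ρ t ^ 2) :
    p * deriv (fun s => (ρ s)⁻¹) t = -(ρ' / w) := by
  rw [(hρ.fun_inv hρ0).deriv]
  field_simp
  linear_combination -ρ' * hpw

theorem ContinuousOn.hasDerivAt_intervalIntegral {E : Type*} [NormedAddCommGroup E]
    [NormedSpace ℝ E] [CompleteSpace E] {f : ℝ → E} {A B y₀ y : ℝ}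
    (hf : ContinuousOn f (Icc A B)) (hy₀ : y₀ ∈ Icc A B) (hy : y ∈ Ioo A B) :
    HasDerivAt (fun x => ∫ s in y₀..x, f s) (f y) y :=
  intervalIntegral.integral_hasDerivAt_right
    (hf.mono (uIcc_subset_Icc hy₀ (Ioo_subset_Icc_self hy))).intervalIntegrable
    (ContinuousOn.stronglyMeasurableAtFilter isOpen_Ioo (hf.mono Ioo_subset_Icc_self) y hy)
    (hf.continuousAt (Icc_mem_nhds hy.1 hy.2))

section Reparametrization

variable {g w φ : ℝ → ℝ} {U V : Set ℝ}

theorem deriv_comp_eqOn_of_hasDerivAt (hU : IsOpen U) (hg : ∀ x ∈ V, HasDerivAt g (w (g x))⁻¹ x)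
    (hgV : MapsTo g V U) (hφ : DifferentiableOn ℝ φ U) :
    EqOn (deriv (φ ∘ g)) ((deriv φ / w) ∘ g) V := fun x hx => by
  have := ((hφ.differentiableAt (hU.mem_nhds (hgV hx))).hasDerivAt.comp x (hg x hx)).deriv
  simpa only [Function.comp_apply, Pi.div_apply, ← div_eq_mul_inv] using this

theorem deriv_deriv_comp_eqOn_of_hasDerivAt (hU : IsOpen U) (hV : IsOpen V)
    (hg : ∀ x ∈ V, HasDerivAt g (w (g x))⁻¹ x) (hgV : MapsTo g V U)
    (hφ : DifferentiableOn ℝ φ U) (hφ' : DifferentiableOn ℝ (deriv φ / w) U) :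
    EqOn (deriv (deriv (φ ∘ g))) ((deriv (deriv φ / w) / w) ∘ g) V := fun x hx => by
  rw [((deriv_comp_eqOn_of_hasDerivAt hU hg hgV hφ).eventuallyEq_of_mem (hV.mem_nhds hx)).deriv_eq]
  exact deriv_comp_eqOn_of_hasDerivAt hU hg hgV hφ' hx

end Reparametrization

theorem deriv_mul_deriv_rpow_neg_quarter {p r ρ : ℝ → ℝ} {U : Set ℝ} {y : ℝ} (hU : IsOpen U)
    (hρ : ∀ t, ρ t = (p t * r t) ^ (1 / 4 : ℝ)) (hρ' : DifferentiableOn ℝ ρ U)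
    (hp : ∀ t ∈ U, 0 < p t) (hr : ∀ t ∈ U, 0 < r t) (hy : y ∈ U) :
    deriv (fun t => p t * deriv (fun s => (p s * r s) ^ (-(1 / 4) : ℝ)) t) y =
      -deriv (deriv ρ / fun t => √(r t / p t)) y := by
  rw [← deriv.neg]
  refine EventuallyEq.deriv_eq (eventually_of_mem (hU.mem_nhds hy) fun t ht => ?_)
  have hinv : (fun s => (p s * r s) ^ (-(1 / 4) : ℝ)) =ᶠ[𝓝 t] fun s => (ρ s)⁻¹ :=
    eventually_of_mem (hU.mem_nhds ht) fun s hs => by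
      simp only [hρ, Real.rpow_neg (mul_pos (hp s hs) (hr s hs)).le]
  simp only [Pi.neg_apply, Pi.div_apply, hinv.deriv_eq]
  refine mul_deriv_inv_of_mul_eq_sq (hρ'.differentiableAt (hU.mem_nhds ht)).hasDerivAt ?_
    (Real.sqrt_pos.2 (div_pos (hr t ht) (hp t ht))).ne' ?_
  · rw [hρ]; exact (Real.rpow_pos_of_pos (mul_pos (hp t ht) (hr t ht)) _).ne'
  · rw [hρ]; exact mul_sqrt_div_eq_rpow_quarter_sq (hp t ht) (hr t ht)

theorem neg_rpow_mul_deriv_mul_deriv_rpow_neg_quarter {p r ρ : ℝ → ℝ} {U : Set ℝ} {y : ℝ}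
    (hU : IsOpen U) (hρ : ∀ t, ρ t = (p t * r t) ^ (1 / 4 : ℝ)) (hρ' : DifferentiableOn ℝ ρ U)
    (hp : ∀ t ∈ U, 0 < p t) (hr : ∀ t ∈ U, 0 < r t) (hy : y ∈ U) :
    -((p y / r y ^ 3) ^ (1 / 4 : ℝ) *
        deriv (fun t => p t * deriv (fun s => (p s * r s) ^ (-(1 / 4) : ℝ)) t) y) =
      deriv (deriv ρ / fun t => √(r t / p t)) y / √(r y / p y) / ρ y := by
  rw [deriv_mul_deriv_rpow_neg_quarter hU hρ hρ' hp hr hy,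
    rpow_quarter_div_pow_three_eq (hp y hy) (hr y hy), ← hρ]
  ring

theorem potential_Q_alternative_representation_general
    (A B : ℝ)
    (p r : ℝ → ℝ) (q : ℝ → ℂ)
    (hp : ContDiffOn ℝ 2 p (Set.Icc A B))
    (hr : ContDiffOn ℝ 2 r (Set.Icc A B))
    (hppos : ∀ y ∈ Set.Icc A B, 0 < p y)
    (hrpos : ∀ y ∈ Set.Icc A B, 0 < r y)
    (y₀ : ℝ) (hy₀ : y₀ ∈ Set.Icc A B)
    (l : ℝ → ℝ) (hl : ∀ y, l y = ∫ s in y₀..y, Real.sqrt (r s / p s))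
    (ρ : ℝ → ℝ) (hρ : ∀ y, ρ y = (p y * r y) ^ (1 / 4 : ℝ))
    (a b : ℝ) (ha : a = l A) (hb : b = l B)
    (hmono : StrictMonoOn l (Set.Icc A B))
    (linv : ℝ → ℝ)
    (hlinv_maps : Set.MapsTo linv (Set.Icc a b) (Set.Icc A B))
    (hlinv_left : ∀ y ∈ Set.Icc A B, linv (l y) = y)
    (hlinv_right : ∀ x ∈ Set.Icc a b, l (linv x) = x)
    (Q : ℝ → ℂ)
    (hQ : ∀ x, Q x = q (linv x) / (r (linv x) : ℂ) -
      (((p (linv x) / (r (linv x)) ^ 3) ^ (1 / 4 : ℝ) *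
        deriv (fun t => p t * deriv (fun s => (p s * r s) ^ (-(1 / 4) : ℝ)) t) (linv x) : ℝ) : ℂ))
    (ρhat : ℝ → ℝ) (hρhat : ∀ x, ρhat x = ρ (linv x)) :
    ∀ y ∈ Set.Ioo A B,
      Q (l y) = q y / (r y : ℂ) + Complex.ofReal (deriv (deriv ρhat) (l y) / ρ y) ∧
      -((p y / r y ^ 3) ^ (1 / 4 : ℝ) *
          deriv (fun t => p t * deriv (fun s => (p s * r s) ^ (-(1 / 4) : ℝ)) t) y) =
        deriv (deriv ρhat) (l y) / ρ y := by
  intro y hy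
  subst ha hb
  set w : ℝ → ℝ := fun t => √(r t / p t)
  have hIoo : Ioo A B ⊆ Icc A B := Ioo_subset_Icc_self
  have hw : ContDiffOn ℝ 2 w (Icc A B) := (hr.div hp fun t ht => (hppos t ht).ne').sqrt
    fun t ht => (div_pos (hrpos t ht) (hppos t ht)).ne'
  have hw0 : ∀ t ∈ Ioo A B, w t ≠ 0 := fun t ht =>
    (Real.sqrt_pos.2 (div_pos (hrpos t (hIoo ht)) (hppos t (hIoo ht)))).ne'
  have hρC : ContDiffOn ℝ 2 ρ (Ioo A B) := by
    rw [funext hρ]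
    exact ((hp.mul hr).rpow_const_of_ne fun t ht =>
      (mul_pos (hppos t ht) (hrpos t ht)).ne').mono hIoo
  have hF : DifferentiableOn ℝ (deriv ρ / w) (Ioo A B) :=
    ((hρC.deriv_of_isOpen isOpen_Ioo (m := 1) le_rfl).differentiableOn one_ne_zero).div
      ((hw.mono hIoo).differentiableOn two_ne_zero) hw0
  have hlinv' : ∀ x ∈ Ioo (l A) (l B), HasDerivAt linv (w (linv x))⁻¹ x :=
    fun x => hmono.hasDerivAt_of_invOn_Icc hlinv_maps hlinv_left hlinv_right
      (fun t ht => funext hl ▸ hw.continuousOn.hasDerivAt_intervalIntegral hy₀ ht) hw0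
  have hρhat'' : deriv (deriv ρhat) (l y) = deriv (deriv ρ / w) y / w y := by
    have := deriv_deriv_comp_eqOn_of_hasDerivAt isOpen_Ioo isOpen_Ioo hlinv'
      (hmono.mapsTo_Ioo_of_invOn_Icc hlinv_maps hlinv_left hlinv_right)
      (hρC.differentiableOn two_ne_zero) hF (hmono.mapsTo_Ioo hy)
    rw [show ρhat = ρ ∘ linv from funext hρhat, this, Function.comp_apply, hlinv_left y (hIoo hy)]
    rfl
  have hpotential := neg_rpow_mul_deriv_mul_deriv_rpow_neg_quarter isOpen_Ioo hρ
    (hρC.differentiableOn two_ne_zero) (fun t ht => hppos t (hIoo ht))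
    (fun t ht => hrpos t (hIoo ht)) hy
  rw [← hρhat''] at hpotential
  refine ⟨?_, hpotential⟩
  rw [hQ, hlinv_left y (hIoo hy), ← hpotential]
  push_cast
  ring

theorem potential_Q_alternative_representation
    (A B : ℝ) (hAB : A < B)
    (p r : ℝ → ℝ) (q : ℝ → ℂ)
    (hp : ContDiffOn ℝ 2 p (Set.Icc A B))
    (hr : ContDiffOn ℝ 2 r (Set.Icc A B))
    (hq : ContinuousOn q (Set.Icc A B))
    (hppos : ∀ y ∈ Set.Icc A B, 0 < p y)
    (hrpos : ∀ y ∈ Set.Icc A B, 0 < r y)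
    (y₀ : ℝ) (hy₀ : y₀ ∈ Set.Icc A B)
    (l : ℝ → ℝ) (hl : ∀ y, l y = ∫ s in y₀..y, Real.sqrt (r s / p s))
    (ρ : ℝ → ℝ) (hρ : ∀ y, ρ y = (p y * r y) ^ (1 / 4 : ℝ))
    (a b : ℝ) (ha : a = l A) (hb : b = l B)
    (hmono : StrictMonoOn l (Set.Icc A B))
    (linv : ℝ → ℝ)
    (hlinv_maps : Set.MapsTo linv (Set.Icc a b) (Set.Icc A B))
    (hlinv_left : ∀ y ∈ Set.Icc A B, linv (l y) = y)
    (hlinv_right : ∀ x ∈ Set.Icc a b, l (linv x) = x)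
    (Q : ℝ → ℂ)
    (hQ : ∀ x, Q x = q (linv x) / (r (linv x) : ℂ) -
      (((p (linv x) / (r (linv x)) ^ 3) ^ (1 / 4 : ℝ) *
        deriv (fun t => p t * deriv (fun s => (p s * r s) ^ (-(1 / 4) : ℝ)) t) (linv x) : ℝ) : ℂ))
    (ρhat : ℝ → ℝ) (hρhat : ∀ x, ρhat x = ρ (linv x)) :
    ∀ y ∈ Set.Ioo A B,
      Q (l y) = q y / (r y : ℂ) + Complex.ofReal (deriv (deriv ρhat) (l y) / ρ y) ∧
      -((p y / r y ^ 3) ^ (1 / 4 : ℝ) *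
          deriv (fun t => p t * deriv (fun s => (p s * r s) ^ (-(1 / 4) : ℝ)) t) y) =
        deriv (deriv ρhat) (l y) / ρ y :=
  potential_Q_alternative_representation_general A B p r q hp hr hppos hrpos y₀ hy₀ l hl ρ hρ a b ha
    hb hmono linv hlinv_maps hlinv_left hlinv_right Q hQ ρhat hρhat
end
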